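/- arXiv:1901.04244 — 7 statements merged into one kernel-verified Lean document; each statement's English description precedes it below -/
import Mathlib

section
/- Let X be a real random variable satisfying condition (bern1) with constants D, M > 0. Then there exists a positive constant C₁ depending only on D (and not on M) such that for every complex u with |u| ≤ 1/(8M) and every complex v with |v| ≤ 1/2, |E e^{uX − v²/2} − 1| ≤ C₁ (|u| E|X| + |v|). -/
open MeasureTheory Real

open scoped Nat ENNReal

/-!
Condition (bern1) with `s = 1` gives `|E X^(k+1)| ≤ D E|X| (k+1)! M^k`. Even moments are absolute
moments, so this bounds the cosh series and makes `E e^(r|X|)` finite for `rM < 1`. By dominated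
convergence `E e^(uX) = ∑ u^k E X^k / k!`, and the terms with `k ≥ 1` are dominated by the geometric
series `D E|X| |u| (|u|M)^(k-1)`. Finally the Gaussian factor `e^(-v²/2)` is within `|v|²` of `1`.
-/

theorem MeasureTheory.Integrable.of_hasSum_of_summable_integral_norm
    {α E ι : Type*} [MeasurableSpace α] {μ : Measure α} [NormedAddCommGroup E] [Countable ι]
    {F : ι → α → E} {f : α → E} (hf : AEStronglyMeasurable f μ)
    (hF_int : ∀ i, Integrable (F i) μ) (hF_sum : Summable fun i ↦ ∫ a, ‖F i a‖ ∂μ)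
    (hF_f : ∀ a, HasSum (F · a) (f a)) : Integrable f μ := by
  refine ⟨hf, ?_⟩
  calc ∫⁻ a, ‖f a‖ₑ ∂μ ≤ ∫⁻ a, ∑' i, ‖F i a‖ₑ ∂μ := by
        refine lintegral_mono fun a ↦ ?_
        rw [← (hF_f a).tsum_eq]
        exact enorm_tsum_le_tsum_enorm
    _ = ∑' i, ENNReal.ofReal (∫ a, ‖F i a‖ ∂μ) := by
        rw [lintegral_tsum fun i ↦ (hF_int i).1.enorm]
        simp_rw [ofReal_integral_norm_eq_lintegral_enorm (hF_int _)]
    _ = ENNReal.ofReal (∑' i, ∫ a, ‖F i a‖ ∂μ) :=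
        (ENNReal.ofReal_tsum_of_nonneg (fun i ↦ integral_nonneg fun a ↦ norm_nonneg _) hF_sum).symm
    _ < ∞ := ENNReal.ofReal_lt_top

section MomentSequence

variable {m : ℕ → ℝ} {C M r : ℝ}

theorem pow_div_factorial_mul_abs_le (hm : ∀ k : ℕ, |m (k + 1)| ≤ C * (k + 1)! * M ^ k)
    (hr : 0 ≤ r) (k : ℕ) : r ^ (k + 1) / (k + 1)! * |m (k + 1)| ≤ C * r * (r * M) ^ k :=
  calc r ^ (k + 1) / (k + 1)! * |m (k + 1)| ≤ r ^ (k + 1) / (k + 1)! * (C * (k + 1)! * M ^ k) := by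
        gcongr
        exact hm k
    _ = C * r * (r * M) ^ k := by
        field_simp
        ring

theorem summable_pow_div_factorial_mul_abs (hm : ∀ k : ℕ, |m (k + 1)| ≤ C * (k + 1)! * M ^ k)
    (hr : 0 ≤ r) (hM : 0 ≤ M) (hrM : r * M < 1) :
    Summable fun k ↦ r ^ k / k ! * |m k| := by
  refine (summable_nat_add_iff 1).mp ?_
  refine Summable.of_nonneg_of_le (fun k ↦ by positivity) (pow_div_factorial_mul_abs_le hm hr)
    ((summable_geometric_of_lt_one (by positivity) hrM).mul_left (C * r))

end MomentSequence

section Moments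

variable {Ω : Type*} [MeasurableSpace Ω] {μ : Measure Ω} {X : Ω → ℝ} {C M r : ℝ}

theorem integrable_cosh_mul (hX : AEMeasurable X μ)
    (hint : ∀ k : ℕ, Integrable (fun ω ↦ |X ω| ^ k) μ)
    (hm : ∀ k : ℕ, |∫ ω, X ω ^ (k + 1) ∂μ| ≤ C * (k + 1)! * M ^ k)
    (hr : 0 ≤ r) (hM : 0 ≤ M) (hrM : r * M < 1) :
    Integrable (fun ω ↦ cosh (r * X ω)) μ := by
  set F : ℕ → Ω → ℝ := fun n ω ↦ r ^ (2 * n) / (2 * n)! * |X ω| ^ (2 * n)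
  have hF_int : ∀ n, Integrable (F n) μ := fun n ↦ (hint _).const_mul _
  have hF_norm : ∀ n, ∫ ω, ‖F n ω‖ ∂μ = r ^ (2 * n) / (2 * n)! * |∫ ω, X ω ^ (2 * n) ∂μ| := by
    intro n
    have heven : ∀ ω, |X ω| ^ (2 * n) = X ω ^ (2 * n) := fun ω ↦ (even_two_mul n).pow_abs _
    have hF : ∀ ω, ‖F n ω‖ = r ^ (2 * n) / (2 * n)! * X ω ^ (2 * n) := fun ω ↦ by
      rw [norm_of_nonneg (by positivity), ← heven]
    have hnonneg : 0 ≤ ∫ ω, X ω ^ (2 * n) ∂μ :=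
      integral_nonneg fun ω ↦ (even_two_mul n).pow_nonneg (X ω)
    simp_rw [hF, integral_const_mul, abs_of_nonneg hnonneg]
  refine Integrable.of_hasSum_of_summable_integral_norm (F := F) (by fun_prop) hF_int ?_ ?_
  · have hsum := (summable_pow_div_factorial_mul_abs (m := fun k ↦ ∫ ω, X ω ^ k ∂μ) hm hr hM
      hrM).comp_injective (mul_right_injective₀ (two_ne_zero' ℕ))
    simp_rw [hF_norm]
    exact hsum
  · intro ω
    have hterm : (fun n ↦ F n ω) = fun n ↦ (r * X ω) ^ (2 * n) / (2 * n)! := by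
      funext n
      rw [mul_pow, ← (even_two_mul n).pow_abs (X ω)]
      ring
    rw [hterm]
    exact Real.hasSum_cosh _

theorem integrable_exp_mul_abs (hX : AEMeasurable X μ)
    (hint : ∀ k : ℕ, Integrable (fun ω ↦ |X ω| ^ k) μ)
    (hm : ∀ k : ℕ, |∫ ω, X ω ^ (k + 1) ∂μ| ≤ C * (k + 1)! * M ^ k)
    (hr : 0 ≤ r) (hM : 0 ≤ M) (hrM : r * M < 1) :
    Integrable (fun ω ↦ exp (r * |X ω|)) μ := by
  refine ((integrable_cosh_mul hX hint hm hr hM hrM).const_mul 2).mono' (by fun_prop) ?_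
  refine Filter.Eventually.of_forall fun ω ↦ ?_
  rw [norm_of_nonneg (exp_pos _).le, ← cosh_abs (r * X ω), abs_mul, abs_of_nonneg hr, cosh_eq]
  linarith [exp_pos (-(r * |X ω|))]

theorem hasSum_integral_cexp_mul (hX : AEMeasurable X μ) (u : ℂ)
    (hexp : Integrable (fun ω ↦ exp (‖u‖ * |X ω|)) μ) :
    HasSum (fun k ↦ u ^ k / k ! * ∫ ω, (X ω : ℂ) ^ k ∂μ) (∫ ω, Complex.exp (u * X ω) ∂μ) := by
  simp_rw [← integral_const_mul]
  refine hasSum_integral_of_dominated_convergence (fun k ω ↦ (‖u‖ * |X ω|) ^ k / k !)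
    (fun k ↦ by fun_prop) (fun k ↦ Filter.Eventually.of_forall fun ω ↦ ?_)
    (Filter.Eventually.of_forall fun ω ↦ Real.summable_pow_div_factorial _) ?_
    (Filter.Eventually.of_forall fun ω ↦ ?_)
  · simp [mul_pow, Complex.norm_real, div_mul_eq_mul_div]
  · simpa only [Real.exp_eq_exp_ℝ, (NormedSpace.expSeries_div_hasSum_exp _).tsum_eq] using hexp
  · simpa only [Complex.exp_eq_exp_ℂ, mul_pow, div_mul_eq_mul_div] using
      NormedSpace.expSeries_div_hasSum_exp (u * X ω)

theorem norm_integral_cexp_mul_sub_one_le [IsProbabilityMeasure μ] (hX : AEMeasurable X μ)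
    (hint : ∀ k : ℕ, Integrable (fun ω ↦ |X ω| ^ k) μ)
    (hm : ∀ k : ℕ, |∫ ω, X ω ^ (k + 1) ∂μ| ≤ C * (k + 1)! * M ^ k) (hM : 0 ≤ M)
    {u : ℂ} (hu : ‖u‖ * M < 1) :
    ‖(∫ ω, Complex.exp (u * X ω) ∂μ) - 1‖ ≤ C * ‖u‖ / (1 - ‖u‖ * M) := by
  have hsum := hasSum_integral_cexp_mul hX u
    (integrable_exp_mul_abs hX hint hm (norm_nonneg u) hM hu)
  have hcast : ∀ k : ℕ, ∫ ω, (X ω : ℂ) ^ k ∂μ = ↑(∫ ω, X ω ^ k ∂μ) := fun k ↦ by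
    rw [← integral_complex_ofReal]; push_cast; rfl
  simp_rw [hcast] at hsum
  have htail := (hasSum_nat_add_iff' 1).mpr hsum
  simp only [Finset.range_one, Finset.sum_singleton, pow_zero, Nat.factorial_zero, Nat.cast_one,
    div_one, integral_const, probReal_univ, smul_eq_mul, mul_one, Complex.ofReal_one] at htail
  rw [div_eq_mul_inv]
  refine htail.norm_le_of_bounded
    ((hasSum_geometric_of_lt_one (by positivity) hu).mul_left (C * ‖u‖)) fun k ↦ ?_
  simpa [norm_div, Complex.norm_real] using
    pow_div_factorial_mul_abs_le (m := fun k ↦ ∫ ω, X ω ^ k ∂μ) hm (norm_nonneg u) k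

end Moments

theorem norm_mul_sub_one_le {R : Type*} [NormedRing R] [NormOneClass R] (a b : R) :
    ‖a * b - 1‖ ≤ (1 + ‖a - 1‖) * ‖b - 1‖ + ‖a - 1‖ :=
  calc ‖a * b - 1‖ = ‖a * (b - 1) + (a - 1)‖ := by noncomm_ring
    _ ≤ ‖a‖ * ‖b - 1‖ + ‖a - 1‖ := (norm_add_le _ _).trans (by gcongr; exact norm_mul_le _ _)
    _ ≤ (1 + ‖a - 1‖) * ‖b - 1‖ + ‖a - 1‖ := by
        gcongr
        simpa using norm_le_norm_add_norm_sub' a 1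

theorem norm_cexp_neg_sq_div_two_sub_one_le {v : ℂ} (hv : ‖v‖ ≤ 1) :
    ‖Complex.exp (-(v ^ 2 / 2)) - 1‖ ≤ ‖v‖ ^ 2 := by
  have hnorm : ‖-(v ^ 2 / 2)‖ = ‖v‖ ^ 2 / 2 := by simp
  have hle : ‖v‖ ^ 2 ≤ 1 := pow_le_one₀ (norm_nonneg v) hv
  calc ‖Complex.exp (-(v ^ 2 / 2)) - 1‖ ≤ 2 * ‖-(v ^ 2 / 2)‖ :=
        Complex.norm_exp_sub_one_le (by rw [hnorm]; linarith)
    _ = ‖v‖ ^ 2 := by rw [hnorm]; ring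

/-- Lemma 1, first inequality: if a real random variable `X` satisfies the Bernstein-type
condition (bern1) with constants `D, M > 0`, then there is a constant `C₁ > 0` depending
only on `D` (not on `M`) such that for all complex `u, v` with `|u| ≤ 1/(8M)`, `|v| ≤ 1/2`,
`|E e^{uX − v²/2} − 1| ≤ C₁ (|u| E|X| + |v|)`. -/
theorem mgf_expansion_first_order (D : ℝ) (hD : 0 < D) :
    ∃ C₁ > (0 : ℝ),
      ∀ (Ω : Type) (_ : MeasurableSpace Ω) (μ : Measure Ω), IsProbabilityMeasure μ →
      ∀ (X : Ω → ℝ), Measurable X →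
      (∀ k : ℕ, Integrable (fun ω => |X ω| ^ k) μ) →
      ∀ (M : ℝ), 0 < M →
      (∀ s ∈ ({1, 2, 3} : Set ℕ), ∀ k : ℕ, s ≤ k →
        |∫ ω, X ω ^ k ∂μ| ≤ D * (Nat.factorial k) * M ^ (k - s) * ∫ ω, |X ω| ^ s ∂μ) →
      ∀ (u v : ℂ), ‖u‖ ≤ 1 / (8 * M) → ‖v‖ ≤ 1 / 2 →
        ‖(∫ ω, Complex.exp (u * (X ω : ℂ) - v ^ 2 / 2) ∂μ) - 1‖
          ≤ C₁ * (‖u‖ * ∫ ω, |X ω| ∂μ + ‖v‖) := by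
  refine ⟨2 * D + 1, by positivity, ?_⟩
  intro Ω _ μ _ X hX hint M hM hbern u v hu hv
  set A := ∫ ω, |X ω| ∂μ
  have hA : 0 ≤ A := integral_nonneg fun ω ↦ abs_nonneg _
  have hm : ∀ k : ℕ, |∫ ω, X ω ^ (k + 1) ∂μ| ≤ D * A * (k + 1)! * M ^ k := fun k ↦ by
    simpa [A, mul_right_comm _ A] using hbern 1 (by simp) (k + 1) (by omega)
  have huM : ‖u‖ * M ≤ 1 / 8 := by
    rw [le_div_iff₀ (by positivity)] at hu
    linarith
  have hE : ‖(∫ ω, Complex.exp (u * X ω) ∂μ) - 1‖ ≤ 8 / 7 * (D * A * ‖u‖) := by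
    refine (norm_integral_cexp_mul_sub_one_le hX.aemeasurable hint hm hM.le
      (by linarith)).trans ?_
    rw [div_le_iff₀ (by linarith)]
    nlinarith [mul_nonneg (mul_nonneg (mul_nonneg hD.le hA) (norm_nonneg u)) (sub_nonneg.2 huM)]
  have hG := norm_cexp_neg_sq_div_two_sub_one_le (hv.trans (by norm_num))
  have hv2 : ‖v‖ ^ 2 ≤ ‖v‖ / 2 := by nlinarith [norm_nonneg v]
  have hfactor : ∫ ω, Complex.exp (u * X ω - v ^ 2 / 2) ∂μ
      = Complex.exp (-(v ^ 2 / 2)) * ∫ ω, Complex.exp (u * X ω) ∂μ := by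
    rw [← integral_const_mul]
    simp_rw [← Complex.exp_add, neg_add_eq_sub]
  calc _ ≤ (1 + ‖Complex.exp (-(v ^ 2 / 2)) - 1‖) * ‖(∫ ω, Complex.exp (u * X ω) ∂μ) - 1‖
        + ‖Complex.exp (-(v ^ 2 / 2)) - 1‖ := hfactor ▸ norm_mul_sub_one_le _ _
    _ ≤ (1 + 1 / 4) * (8 / 7 * (D * A * ‖u‖)) + ‖v‖ / 2 := by
        gcongr
        · nlinarith [norm_nonneg v]
        · linarith
    _ ≤ (2 * D + 1) * (‖u‖ * A + ‖v‖) := by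
        nlinarith [norm_nonneg v, mul_nonneg hA (norm_nonneg u)]
end

section
/- Let X be a real random variable satisfying condition (bern1) with constants D, M > 0. Then there exists a positive constant C₃ depending only on D (and not on M) such that for every complex u with |u| ≤ 1/(8M) and every complex v with |v| ≤ 1/2, |E e^{uX − v²/2} − 1 − u E X + v²/2 − (u²/2) E X²| ≤ C₃ (|u|³ E|X|³ + |v|³). -/
/-!
Write `E e^{uX - v²/2} = e^{-v²/2} A` with `A = E e^{uX}` and split the error into the
third-order Taylor remainder of `A`, the product `(e^{-v²/2} - 1)(A - 1)` and the second-order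
remainder of `e^{-v²/2}`. The Taylor remainders of `A` are at most `|u|ⁿ E|X|ⁿ e^{|u||X|}`
(`n = 1, 3`), and (bern1) bounds these exponential moments by a multiple of `E|X|ⁿ` once
`|u| M ≤ 1/8`: expanding `e^{|u||X|}` gives a series dominated by a geometric one, after odd
absolute moments are interpolated between even ones, which are genuine moments. The cross term
`|v|² |u| E|X|` is absorbed by AM-GM and Jensen's `(E|X|)³ ≤ E|X|³`.
-/

open MeasureTheory Real
open scoped Nat

lemma pow_succ_le_mul_pow_add_pow_div {y a : ℝ} (hy : 0 ≤ y) (ha : 0 < a) (n : ℕ) :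
    y ^ (n + 1) ≤ a * y ^ n + y ^ (n + 2) / a := by
  have hy_le : y ≤ a + y ^ 2 / a := by
    rw [← sub_nonneg, show a + y ^ 2 / a - y = ((y - a / 2) ^ 2 + 3 * a ^ 2 / 4) / a by
      field_simp; ring]
    positivity
  calc y ^ (n + 1) = y ^ n * y := pow_succ y n
    _ ≤ y ^ n * (a + y ^ 2 / a) := by gcongr
    _ = a * y ^ n + y ^ (n + 2) / a := by ring

lemma Nat.factorial_add_le (n k : ℕ) : (n + k)! ≤ 2 ^ (n + k) * n ! * k ! := by
  rw [← Nat.add_choose_mul_factorial_mul_factorial]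
  gcongr
  exact Nat.choose_le_two_pow _ _

lemma hasSum_pow_div_factorial_mul_pow_add (s : ℕ) (t y : ℝ) :
    HasSum (fun k : ℕ => t ^ k / k ! * y ^ (s + k)) (y ^ s * rexp (t * y)) := by
  have h := (NormedSpace.expSeries_div_hasSum_exp (t * y)).mul_left (y ^ s)
  rw [← Real.exp_eq_exp_ℝ] at h
  exact h.congr_fun fun k => by ring

lemma norm_cexp_neg_sq_half_mul_sub_le (A P v : ℂ) (hv : ‖v‖ ≤ 1 / 2) :
    ‖Complex.exp (-(v ^ 2 / 2)) * A - P + v ^ 2 / 2‖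
      ≤ ‖A - P‖ + ‖v‖ ^ 2 * ‖A - 1‖ + ‖v‖ ^ 3 := by
  set w := -(v ^ 2 / 2)
  have hw : ‖w‖ = ‖v‖ ^ 2 / 2 := by simp [w, norm_pow]
  have hw1 : ‖w‖ ≤ 1 := by rw [hw]; nlinarith [norm_nonneg v]
  have hexp_sub_one : ‖Complex.exp w - 1‖ ≤ ‖v‖ ^ 2 := by
    linarith [Complex.norm_exp_sub_one_le hw1]
  have hexp_sub_one_sub : ‖Complex.exp w - 1 - w‖ ≤ ‖v‖ ^ 3 := by
    refine (Complex.norm_exp_sub_one_sub_id_le hw1).trans ?_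
    rw [hw]; nlinarith [norm_nonneg v, pow_nonneg (norm_nonneg v) 3]
  calc ‖Complex.exp w * A - P + v ^ 2 / 2‖
      = ‖(A - P) + (Complex.exp w - 1) * (A - 1) + (Complex.exp w - 1 - w)‖ := by
        congr 1; ring
    _ ≤ ‖A - P‖ + ‖Complex.exp w - 1‖ * ‖A - 1‖ + ‖Complex.exp w - 1 - w‖ := by
        grw [norm_add_le, norm_add_le, norm_mul]
    _ ≤ ‖A - P‖ + ‖v‖ ^ 2 * ‖A - 1‖ + ‖v‖ ^ 3 := by gcongr

section

variable {Ω : Type*} [MeasurableSpace Ω] {μ : Measure Ω}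

lemma integrable_and_integral_eq_of_hasSum_of_nonneg {f : ℕ → Ω → ℝ} {g : Ω → ℝ} {S : ℝ}
    (hf : ∀ k, Integrable (f k) μ) (hf_nonneg : ∀ k ω, 0 ≤ f k ω)
    (hfg : ∀ ω, HasSum (fun k => f k ω) (g ω)) (hg : AEStronglyMeasurable g μ)
    (hS : HasSum (fun k => ∫ ω, f k ω ∂μ) S) :
    Integrable g μ ∧ ∫ ω, g ω ∂μ = S := by
  have hg_nonneg : 0 ≤ᵐ[μ] g := ae_of_all _ fun ω => (hfg ω).nonneg (hf_nonneg · ω)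
  have hlintegral : ∫⁻ ω, ENNReal.ofReal (g ω) ∂μ = ENNReal.ofReal S := by
    calc ∫⁻ ω, ENNReal.ofReal (g ω) ∂μ = ∫⁻ ω, ∑' k, ENNReal.ofReal (f k ω) ∂μ := by
          refine lintegral_congr fun ω => ?_
          rw [← (hfg ω).tsum_eq, ENNReal.ofReal_tsum_of_nonneg (hf_nonneg · ω) (hfg ω).summable]
      _ = ∑' k, ENNReal.ofReal (∫ ω, f k ω ∂μ) := by
          rw [lintegral_tsum fun k => (hf k).aemeasurable.ennreal_ofReal]
          congr 1 with k
          exact (ofReal_integral_eq_lintegral_ofReal (hf k) (ae_of_all _ (hf_nonneg k))).symm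
      _ = ENNReal.ofReal S := by
          rw [← hS.tsum_eq, ENNReal.ofReal_tsum_of_nonneg
            (fun k => integral_nonneg (hf_nonneg k)) hS.summable]
  refine ⟨⟨hg, (hasFiniteIntegral_iff_ofReal hg_nonneg).2 (hlintegral ▸ ENNReal.ofReal_lt_top)⟩, ?_⟩
  rw [integral_eq_lintegral_of_nonneg_ae hg_nonneg hg, hlintegral,
    ENNReal.toReal_ofReal (hS.nonneg fun k => integral_nonneg (hf_nonneg k))]

variable {X : Ω → ℝ}

lemma integral_abs_pow_succ_le (hInt : ∀ k : ℕ, Integrable (fun ω => |X ω| ^ k) μ) {a : ℝ}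
    (ha : 0 < a) (n : ℕ) :
    ∫ ω, |X ω| ^ (n + 1) ∂μ ≤ a * ∫ ω, |X ω| ^ n ∂μ + (∫ ω, |X ω| ^ (n + 2) ∂μ) / a := by
  rw [← integral_const_mul, ← integral_div, ← integral_add ((hInt n).const_mul a)
    ((hInt (n + 2)).div_const a)]
  exact integral_mono (hInt (n + 1)) (((hInt n).const_mul a).add ((hInt (n + 2)).div_const a))
    fun ω => pow_succ_le_mul_pow_add_pow_div (abs_nonneg (X ω)) ha n

lemma integral_abs_pow_le_of_bernstein (hInt : ∀ k : ℕ, Integrable (fun ω => |X ω| ^ k) μ)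
    {D M : ℝ} (hD : 0 ≤ D) (hM : 0 < M) {s : ℕ}
    (hbern : ∀ k : ℕ, s ≤ k →
      |∫ ω, X ω ^ k ∂μ| ≤ D * k ! * M ^ (k - s) * ∫ ω, |X ω| ^ s ∂μ) (k : ℕ) :
    ∫ ω, |X ω| ^ (s + k) ∂μ ≤ (2 * D + 1) * (s + k + 1)! * M ^ k * ∫ ω, |X ω| ^ s ∂μ := by
  set I := ∫ ω, |X ω| ^ s ∂μ
  have hI : 0 ≤ I := integral_nonneg fun ω => by positivity
  have heven : ∀ j, Even (s + j) → ∫ ω, |X ω| ^ (s + j) ∂μ ≤ D * (s + j)! * M ^ j * I := by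
    intro j hj
    have h := hbern (s + j) (by omega)
    rw [Nat.add_sub_cancel_left, ← integral_congr_ae (ae_of_all _ fun ω => hj.pow_abs (X ω)),
      abs_of_nonneg (integral_nonneg fun ω => by positivity)] at h
    exact h
  rcases k with _ | j
  · have : (1 : ℝ) ≤ (2 * D + 1) * (s + 0 + 1)! := by
      nlinarith [(Nat.one_le_cast (α := ℝ)).2 (Nat.factorial_pos (s + 0 + 1))]
    simpa using mul_le_mul_of_nonneg_right this hI
  rcases Nat.even_or_odd (s + (j + 1)) with hodd | heven'
  · calc ∫ ω, |X ω| ^ (s + (j + 1)) ∂μ ≤ D * (s + (j + 1))! * M ^ (j + 1) * I := heven _ hodd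
      _ ≤ (2 * D + 1) * (s + (j + 1) + 1)! * M ^ (j + 1) * I := by
        gcongr ?_ * _ * _
        exact mul_le_mul (by linarith) (by exact_mod_cast Nat.factorial_le (by omega))
          (by positivity) (by positivity)
  · obtain ⟨i, hi⟩ := heven'
    have hfac2 : ((s + j)! : ℝ) ≤ (s + j + 2)! := by exact_mod_cast Nat.factorial_le (by omega)
    calc ∫ ω, |X ω| ^ (s + j + 1) ∂μ
        ≤ M * ∫ ω, |X ω| ^ (s + j) ∂μ + (∫ ω, |X ω| ^ (s + j + 2) ∂μ) / M :=
          integral_abs_pow_succ_le hInt hM _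
      _ ≤ M * (D * (s + j)! * M ^ j * I) + D * (s + j + 2)! * M ^ (j + 2) * I / M := by
          gcongr
          exacts [heven j ⟨i, by omega⟩, heven (j + 2) ⟨i + 1, by omega⟩]
      _ = D * ((s + j)! + (s + j + 2)!) * M ^ (j + 1) * I := by
          field_simp
          ring
      _ ≤ (2 * D + 1) * (s + j + 2)! * M ^ (j + 1) * I := by
          gcongr ?_ * _ * _
          nlinarith [Nat.cast_nonneg (α := ℝ) (s + j + 2)!]

lemma cast_factorial_add_succ_le_of_le_three {s : ℕ} (hs : s ≤ 3) (k : ℕ) :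
    ((s + k + 1)! : ℝ) ≤ 384 * 2 ^ k * k ! := by
  have h : (s + k + 1)! ≤ 2 ^ (4 + k) * 4 ! * k ! :=
    (Nat.factorial_le (by omega)).trans (Nat.factorial_add_le 4 k)
  rw [pow_add] at h
  norm_num [Nat.factorial] at h
  exact_mod_cast h.trans_eq (by ring)

lemma integral_abs_pow_mul_exp_le (hX : Measurable X)
    (hInt : ∀ k : ℕ, Integrable (fun ω => |X ω| ^ k) μ) {s : ℕ} (hs : s ≤ 3) {B M t : ℝ}
    (ht : 0 ≤ t) (hM : 0 ≤ M) (htM : t * M ≤ 1 / 8)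
    (hmom : ∀ k : ℕ, ∫ ω, |X ω| ^ (s + k) ∂μ ≤ B * (s + k + 1)! * M ^ k) :
    Integrable (fun ω => |X ω| ^ s * rexp (t * |X ω|)) μ ∧
      ∫ ω, |X ω| ^ s * rexp (t * |X ω|) ∂μ ≤ 512 * B := by
  have hB : 0 ≤ B := by
    have h : 0 ≤ B * (s + 1)! := by
      simpa using (integral_nonneg fun ω => by positivity).trans (hmom 0)
    exact nonneg_of_mul_nonneg_left h (by positivity)
  have hterm : ∀ k : ℕ, ∫ ω, t ^ k / k ! * |X ω| ^ (s + k) ∂μ ≤ 384 * B * (1 / 4) ^ k := by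
    intro k
    have hk : (0 : ℝ) < k ! := by positivity
    calc ∫ ω, t ^ k / k ! * |X ω| ^ (s + k) ∂μ
        = t ^ k / k ! * ∫ ω, |X ω| ^ (s + k) ∂μ := integral_const_mul _ _
      _ ≤ t ^ k / k ! * (B * (s + k + 1)! * M ^ k) := by gcongr; exact hmom k
      _ ≤ t ^ k / k ! * (B * (384 * 2 ^ k * k !) * M ^ k) := by
          gcongr; exact cast_factorial_add_succ_le_of_le_three hs k
      _ = 384 * B * 2 ^ k * (t * M) ^ k := by field_simp; ring
      _ ≤ 384 * B * 2 ^ k * (1 / 8) ^ k := by gcongr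
      _ = 384 * B * (1 / 4) ^ k := by rw [mul_assoc, ← mul_pow]; norm_num
  have hgeom : HasSum (fun k : ℕ => 384 * B * (1 / 4 : ℝ) ^ k) (512 * B) := by
    have h := (hasSum_geometric_of_lt_one (r := (1 / 4 : ℝ)) (by norm_num) (by norm_num)).mul_left
      (384 * B)
    rwa [show 384 * B * (1 - 1 / 4)⁻¹ = 512 * B by norm_num; ring] at h
  have hsum : Summable fun k : ℕ => ∫ ω, t ^ k / k ! * |X ω| ^ (s + k) ∂μ :=
    hgeom.summable.of_nonneg_of_le (fun k => integral_nonneg fun ω => by positivity) hterm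
  obtain ⟨hint, heq⟩ := integrable_and_integral_eq_of_hasSum_of_nonneg
    (fun k => (hInt (s + k)).const_mul _) (fun k ω => by positivity)
    (fun ω => hasSum_pow_div_factorial_mul_pow_add s t |X ω|)
    (by fun_prop) hsum.hasSum
  exact ⟨hint, heq ▸ hsum.tsum_le_tsum hterm hgeom.summable |>.trans_eq hgeom.tsum_eq⟩

lemma integrable_pow_of_integrable_abs_pow (hX : Measurable X) {i : ℕ}
    (hi : Integrable (fun ω => |X ω| ^ i) μ) : Integrable (fun ω => X ω ^ i) μ :=
  hi.mono' (hX.pow_const i).aestronglyMeasurable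
    (ae_of_all _ fun ω => by rw [Real.norm_eq_abs, abs_pow])

lemma norm_integral_cexp_sub_sum_le (hX : Measurable X)
    (hInt : ∀ k : ℕ, Integrable (fun ω => |X ω| ^ k) μ) (u : ℂ) (n : ℕ)
    (hexp : Integrable (fun ω => |X ω| ^ n * rexp (‖u‖ * |X ω|)) μ) :
    ‖∫ ω, Complex.exp (u * X ω) ∂μ - ∑ i ∈ Finset.range n, u ^ i / i ! * (∫ ω, X ω ^ i ∂μ : ℝ)‖
      ≤ ‖u‖ ^ n * ∫ ω, |X ω| ^ n * rexp (‖u‖ * |X ω|) ∂μ := by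
  set T : Ω → ℂ := fun ω => ∑ i ∈ Finset.range n, u ^ i / i ! * (X ω ^ i : ℝ)
  have hterm_int : ∀ i, Integrable (fun ω => u ^ i / i ! * ((X ω ^ i : ℝ) : ℂ)) μ := fun i =>
    ((integrable_pow_of_integrable_abs_pow hX (hInt i)).ofReal).const_mul _
  have hT : Integrable T μ := integrable_finsetSum _ fun i _ => hterm_int i
  have hT_integral : ∫ ω, T ω ∂μ = ∑ i ∈ Finset.range n, u ^ i / i ! * (∫ ω, X ω ^ i ∂μ : ℝ) := by
    rw [integral_finsetSum _ fun i _ => hterm_int i]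
    simp only [integral_const_mul]
    exact Finset.sum_congr rfl fun i _ => congrArg _ integral_ofReal
  have hR_le : ∀ ω, ‖Complex.exp (u * X ω) - T ω‖
      ≤ ‖u‖ ^ n * (|X ω| ^ n * rexp (‖u‖ * |X ω|)) := fun ω => by
    have hT_eq : T ω = ∑ i ∈ Finset.range n, (u * X ω) ^ i / i ! :=
      Finset.sum_congr rfl fun i _ => by push_cast; ring
    have hnorm : ‖u * X ω‖ = ‖u‖ * |X ω| := by rw [norm_mul, Complex.norm_real, Real.norm_eq_abs]
    rw [hT_eq]
    refine (Complex.norm_exp_sub_sum_le_norm_mul_exp (u * X ω) n).trans_eq ?_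
    rw [hnorm]
    ring
  have hR : Integrable (fun ω => Complex.exp (u * X ω) - T ω) μ :=
    (hexp.const_mul _).mono' (by fun_prop) (ae_of_all _ hR_le)
  have hexp_int : Integrable (fun ω => Complex.exp (u * X ω)) μ :=
    (hR.add hT).congr (ae_of_all _ fun ω => sub_add_cancel _ _)
  rw [← hT_integral, ← integral_sub hexp_int hT, ← integral_const_mul]
  exact norm_integral_le_of_norm_le (hexp.const_mul _) (ae_of_all _ hR_le)

lemma sq_mul_integral_abs_le [IsProbabilityMeasure μ] (h1 : Integrable (fun ω => |X ω|) μ)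
    (h3 : Integrable (fun ω => |X ω| ^ 3) μ) {a b : ℝ} (ha : 0 ≤ a) (hb : 0 ≤ b) :
    a ^ 2 * (b * ∫ ω, |X ω| ∂μ) ≤ a ^ 3 + b ^ 3 * ∫ ω, |X ω| ^ 3 ∂μ := by
  have hjensen : (∫ ω, |X ω| ∂μ) ^ 3 ≤ ∫ ω, |X ω| ^ 3 ∂μ :=
    (convexOn_pow 3).map_integral_le (continuous_pow 3).continuousOn isClosed_Ici
      (ae_of_all _ fun ω => abs_nonneg (X ω)) h1 h3
  set c := b * ∫ ω, |X ω| ∂μ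
  have hc : 0 ≤ c := mul_nonneg hb (integral_nonneg fun ω => abs_nonneg _)
  calc a ^ 2 * c ≤ a ^ 3 + c ^ 3 := by nlinarith [sq_nonneg (a - c), mul_nonneg ha hc]
    _ ≤ a ^ 3 + b ^ 3 * ∫ ω, |X ω| ^ 3 ∂μ := by
      rw [mul_pow]; gcongr

lemma norm_integral_cexp_sub_sum_le_of_bernstein (hX : Measurable X)
    (hInt : ∀ k : ℕ, Integrable (fun ω => |X ω| ^ k) μ) {D M : ℝ} (hD : 0 ≤ D) (hM : 0 < M)
    {n : ℕ} (hn : n ≤ 3)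
    (hbern : ∀ k : ℕ, n ≤ k → |∫ ω, X ω ^ k ∂μ| ≤ D * k ! * M ^ (k - n) * ∫ ω, |X ω| ^ n ∂μ)
    {u : ℂ} (hu : ‖u‖ * M ≤ 1 / 8) :
    ‖∫ ω, Complex.exp (u * X ω) ∂μ - ∑ i ∈ Finset.range n, u ^ i / i ! * (∫ ω, X ω ^ i ∂μ : ℝ)‖
      ≤ ‖u‖ ^ n * (512 * (2 * D + 1) * ∫ ω, |X ω| ^ n ∂μ) := by
  obtain ⟨hint, hle⟩ := integral_abs_pow_mul_exp_le (B := (2 * D + 1) * ∫ ω, |X ω| ^ n ∂μ)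
    hX hInt hn (norm_nonneg u) hM.le hu fun k =>
      (integral_abs_pow_le_of_bernstein hInt hD hM hbern k).trans_eq (by ring)
  refine (norm_integral_cexp_sub_sum_le hX hInt u n hint).trans ?_
  gcongr
  exact hle.trans_eq (by ring)

lemma integral_cexp_sub_const (f : Ω → ℂ) (c : ℂ) :
    ∫ ω, Complex.exp (f ω - c) ∂μ = Complex.exp (-c) * ∫ ω, Complex.exp (f ω) ∂μ := by
  simp_rw [sub_eq_add_neg, Complex.exp_add, integral_mul_const, mul_comm]

end

/-- Lemma 1, third inequality: if a real random variable `X` satisfies the Bernstein-type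
condition (bern1) with constants `D, M > 0`, then there is a constant `C₃ > 0` depending
only on `D` (not on `M`) such that for all complex `u, v` with `|u| ≤ 1/(8M)`, `|v| ≤ 1/2`,
`|E e^{uX − v²/2} − 1 − u E X + v²/2 − (u²/2) E X²| ≤ C₃ (|u|³ E|X|³ + |v|³)`. -/
theorem mgf_expansion_third_order (D : ℝ) (hD : 0 < D) :
    ∃ C₃ > (0 : ℝ),
      ∀ (Ω : Type) (_ : MeasurableSpace Ω) (μ : Measure Ω), IsProbabilityMeasure μ →
      ∀ (X : Ω → ℝ), Measurable X →
      (∀ k : ℕ, Integrable (fun ω => |X ω| ^ k) μ) →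
      ∀ (M : ℝ), 0 < M →
      (∀ s ∈ ({1, 2, 3} : Set ℕ), ∀ k : ℕ, s ≤ k →
        |∫ ω, X ω ^ k ∂μ| ≤ D * (Nat.factorial k) * M ^ (k - s) * ∫ ω, |X ω| ^ s ∂μ) →
      ∀ (u v : ℂ), ‖u‖ ≤ 1 / (8 * M) → ‖v‖ ≤ 1 / 2 →
        ‖(∫ ω, Complex.exp (u * (X ω : ℂ) - v ^ 2 / 2) ∂μ) - 1 - u * (∫ ω, X ω ∂μ : ℝ)
            + v ^ 2 / 2 - u ^ 2 / 2 * (∫ ω, (X ω) ^ 2 ∂μ : ℝ)‖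
          ≤ C₃ * (‖u‖ ^ 3 * ∫ ω, |X ω| ^ 3 ∂μ + ‖v‖ ^ 3) := by
  refine ⟨1024 * (2 * D + 1) + 1, by positivity, ?_⟩
  intro Ω _ μ _ X hX hInt M hM hbern u v hu hv
  have huM : ‖u‖ * M ≤ 1 / 8 := by
    calc ‖u‖ * M ≤ 1 / (8 * M) * M := by gcongr
      _ = 1 / 8 := by field_simp
  have hA1 := norm_integral_cexp_sub_sum_le_of_bernstein hX hInt hD.le hM (by norm_num)
    (hbern 1 (by simp)) huM
  have hA3 := norm_integral_cexp_sub_sum_le_of_bernstein hX hInt hD.le hM le_rfl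
    (hbern 3 (by simp)) huM
  simp only [Finset.sum_range_succ, Finset.range_one, Finset.sum_singleton, pow_zero, pow_one,
    Nat.factorial_zero, Nat.factorial_one, Nat.factorial_two, Nat.cast_one, Nat.cast_ofNat,
    div_one, div_self one_ne_zero, integral_const, probReal_univ, smul_eq_mul, mul_one,
    Complex.ofReal_one] at hA1 hA3
  have hamgm := sq_mul_integral_abs_le (by simpa using hInt 1) (hInt 3) (norm_nonneg v)
    (norm_nonneg u)
  have hI3 : 0 ≤ ∫ ω, |X ω| ^ 3 ∂μ := integral_nonneg fun ω => by positivity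
  set A := ∫ ω, Complex.exp (u * X ω) ∂μ
  set P := 1 + u * ((∫ ω, X ω ∂μ : ℝ) : ℂ) + u ^ 2 / 2 * ((∫ ω, X ω ^ 2 ∂μ : ℝ) : ℂ)
  rw [integral_cexp_sub_const]
  calc _ = ‖Complex.exp (-(v ^ 2 / 2)) * A - P + v ^ 2 / 2‖ := by
        congr 1
        ring
    _ ≤ ‖A - P‖ + ‖v‖ ^ 2 * ‖A - 1‖ + ‖v‖ ^ 3 := norm_cexp_neg_sq_half_mul_sub_le A P v hv
    _ ≤ ‖u‖ ^ 3 * (512 * (2 * D + 1) * ∫ ω, |X ω| ^ 3 ∂μ)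
        + ‖v‖ ^ 2 * (‖u‖ * (512 * (2 * D + 1) * ∫ ω, |X ω| ∂μ)) + ‖v‖ ^ 3 := by gcongr
    _ ≤ _ := by
      nlinarith [mul_le_mul_of_nonneg_left hamgm (by positivity : 0 ≤ 512 * (2 * D + 1)),
        mul_nonneg (by positivity : 0 ≤ ‖u‖ ^ 3) hI3,
        mul_nonneg (by positivity : 0 ≤ 512 * (2 * D + 1)) (by positivity : 0 ≤ ‖v‖ ^ 3)]
end

section
/- Let X be a real random variable satisfying condition (bern1) with constants D, M > 0. Then there exists a positive constant D₁ (depending on D, M and E|X|) such that E|X|^k ≤ D₁ k! (2M)^k for all integers k ≥ 1. -/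
open MeasureTheory Real
open scoped Nat

/-!
For even `k`, `E|X|^k = E X^k ≤ D k! M^(k-1) E|X|` by (bern1) with `s = 1`. For odd `k`,
`|x|^k ≤ |x| + |x|^(k+1)` reduces to the even moment of order `k + 1`, and
`(k+1)! M^k ≤ k! (2M)^k` because `k + 1 ≤ 2^k`. The stray term `E|X|` is absorbed using
`k! (2M)^k ≥ exp(-1/(2M))`, a consequence of the exponential series.
-/

theorem pow_le_self_add_pow_succ {R : Type*} [Semiring R] [LinearOrder R] [IsStrictOrderedRing R]
    {a : R} (ha : 0 ≤ a) {k : ℕ} (hk : 1 ≤ k) : a ^ k ≤ a + a ^ (k + 1) := by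
  rcases le_total a 1 with h | h
  · have hle : a ^ k ≤ a ^ 1 := pow_le_pow_of_le_one ha h hk
    rw [pow_one] at hle
    exact le_add_of_le_of_nonneg hle (pow_nonneg ha _)
  · exact le_add_of_nonneg_of_le ha (pow_le_pow_right₀ h k.le_succ)

theorem factorial_succ_mul_pow_le (k : ℕ) {M : ℝ} (hM : 0 ≤ M) :
    ((k + 1)! : ℝ) * M ^ k ≤ k ! * (2 * M) ^ k := by
  have hk : (k + 1 : ℝ) ≤ 2 ^ k := by exact_mod_cast Nat.lt_two_pow_self
  calc ((k + 1)! : ℝ) * M ^ k = k ! * ((k + 1) * M ^ k) := by push_cast [Nat.factorial_succ]; ring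
    _ ≤ k ! * (2 ^ k * M ^ k) := by gcongr
    _ = k ! * (2 * M) ^ k := by rw [mul_pow]

theorem one_le_exp_inv_mul_factorial_mul_pow {c : ℝ} (hc : 0 < c) (k : ℕ) :
    1 ≤ exp c⁻¹ * (k ! * c ^ k) := by
  calc (1 : ℝ) = c⁻¹ ^ k / k ! * (k ! * c ^ k) := by rw [inv_pow]; field_simp
    _ ≤ exp c⁻¹ * (k ! * c ^ k) := by
      gcongr
      exact pow_div_factorial_le_exp _ (inv_nonneg.2 hc.le) k

theorem integral_abs_pow_le_add_integral_abs_pow_succ {Ω : Type*} [MeasurableSpace Ω]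
    {μ : Measure Ω} {X : Ω → ℝ} {k : ℕ} (hk : 1 ≤ k)
    (h₁ : Integrable (fun ω => |X ω|) μ) (hk₁ : Integrable (fun ω => |X ω| ^ (k + 1)) μ) :
    ∫ ω, |X ω| ^ k ∂μ ≤ ∫ ω, |X ω| ∂μ + ∫ ω, |X ω| ^ (k + 1) ∂μ := by
  rw [← integral_add h₁ hk₁]
  exact integral_mono_of_nonneg (.of_forall fun ω => by positivity) (h₁.add hk₁)
    (.of_forall fun ω => pow_le_self_add_pow_succ (abs_nonneg _) hk)

theorem abs_moment_bound_of_bern1_general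
    {Ω : Type} [MeasurableSpace Ω] (μ : Measure Ω)
    (X : Ω → ℝ)
    (hmom : ∀ k : ℕ, Integrable (fun ω => |X ω| ^ k) μ)
    (D M : ℝ) (hD : 0 < D) (hM : 0 < M)
    (hbern : ∀ s ∈ ({1, 2, 3} : Set ℕ), ∀ k : ℕ, s ≤ k →
      |∫ ω, X ω ^ k ∂μ| ≤ D * (Nat.factorial k) * M ^ (k - s) * ∫ ω, |X ω| ^ s ∂μ) :
    ∃ D₁ > 0, ∀ k : ℕ, 1 ≤ k →
      (∫ ω, |X ω| ^ k ∂μ) ≤ D₁ * (Nat.factorial k) * (2 * M) ^ k := by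
  set A := ∫ ω, |X ω| ∂μ
  have hA : 0 ≤ A := integral_nonneg fun ω => abs_nonneg _
  have heven : ∀ k, 1 ≤ k → Even k → ∫ ω, |X ω| ^ k ∂μ ≤ D * k ! * M ^ (k - 1) * A := by
    intro k hk he
    simpa only [he.pow_abs, pow_one] using (le_abs_self _).trans (hbern 1 (by simp) k hk)
  set C := A * exp (2 * M)⁻¹ + D * A + D * A / (2 * M)
  refine ⟨C + 1, by positivity, fun k hk => ?_⟩
  have hP : (0 : ℝ) < k ! * (2 * M) ^ k := by positivity
  suffices h : ∫ ω, |X ω| ^ k ∂μ ≤ C * (k ! * (2 * M) ^ k) by nlinarith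
  rcases Nat.even_or_odd k with he | ho
  · calc ∫ ω, |X ω| ^ k ∂μ ≤ D * k ! * M ^ (k - 1) * A := heven k hk he
      _ ≤ D * k ! * (2 * M) ^ (k - 1) * A := by gcongr; linarith
      _ = D * A / (2 * M) * (k ! * (2 * M) ^ k) := by
        rw [← pow_sub_one_mul (n := k) (by omega) (2 * M)]; field_simp
      _ ≤ C * (k ! * (2 * M) ^ k) := by
        gcongr; linarith [mul_nonneg hA (exp_pos (2 * M)⁻¹).le, mul_nonneg hD.le hA]
  · have hnext := heven (k + 1) (by omega) ho.add_one
    rw [Nat.add_sub_cancel] at hnext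
    calc ∫ ω, |X ω| ^ k ∂μ ≤ A + ∫ ω, |X ω| ^ (k + 1) ∂μ :=
          integral_abs_pow_le_add_integral_abs_pow_succ hk (by simpa using hmom 1) (hmom (k + 1))
      _ ≤ A * (exp (2 * M)⁻¹ * (k ! * (2 * M) ^ k)) + D * A * ((k + 1)! * M ^ k) := by
        gcongr
        · exact le_mul_of_one_le_right hA (one_le_exp_inv_mul_factorial_mul_pow (by positivity) k)
        · linarith
      _ ≤ A * (exp (2 * M)⁻¹ * (k ! * (2 * M) ^ k)) + D * A * (k ! * (2 * M) ^ k) := by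
        gcongr _ + D * A * ?_; exact factorial_succ_mul_pow_le k hM.le
      _ ≤ C * (k ! * (2 * M) ^ k) := by
        have : 0 ≤ D * A / (2 * M) := by positivity
        nlinarith

/-- If a real random variable `X` satisfies the Bernstein-type condition (bern1) with
constants `D, M > 0`, then there is a constant `D₁ > 0` (depending on `D`, `M` and `E|X|`)
such that `E|X|^k ≤ D₁ k! (2M)^k` for all integers `k ≥ 1`. -/
theorem abs_moment_bound_of_bern1
    {Ω : Type} [MeasurableSpace Ω] (μ : Measure Ω) [IsProbabilityMeasure μ]
    (X : Ω → ℝ) (hX : Measurable X)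
    (hmom : ∀ k : ℕ, Integrable (fun ω => |X ω| ^ k) μ)
    (D M : ℝ) (hD : 0 < D) (hM : 0 < M)
    (hbern : ∀ s ∈ ({1, 2, 3} : Set ℕ), ∀ k : ℕ, s ≤ k →
      |∫ ω, X ω ^ k ∂μ| ≤ D * (Nat.factorial k) * M ^ (k - s) * ∫ ω, |X ω| ^ s ∂μ) :
    ∃ D₁ > 0, ∀ k : ℕ, 1 ≤ k →
      (∫ ω, |X ω| ^ k ∂μ) ≤ D₁ * (Nat.factorial k) * (2 * M) ^ k :=
  abs_moment_bound_of_bern1_general μ X hmom D M hD hM hbern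
end

section
/- Under the combinatorial-sum setup, assume the centering condition (10). Then the variance of the combinatorial sum satisfies Var S_n = (1/(n(n−1))) Σ_{i,j=1}^n (E X_{nij})² + (1/n) Σ_{i,j=1}^n E X_{nij}². -/
/-!
Since `π` is uniform and independent of `X`, the expectation of any function of `(π, X)` is the
average over permutations `p` of the expectation of the same function of `(p, X)`. For fixed `p`
the summands `X i (p i)` are independent, so the second moment of `∑ i, X i (p i)` is
`∑ i, Var X i (p i) + (∑ i, E X i (p i))²`. Under a uniform `p`, each `p i` is uniform on `α` and
each pair `(p i, p k)` with `i ≠ k` is uniform on the off-diagonal pairs; for the doubly centred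
matrix `a i j = E X i j` this gives `E S = 0` and
`𝔼 p, (∑ i, a i (p i))² = ∑ i j, a i j² / (n - 1)`.
-/

open MeasureTheory ProbabilityTheory

/-- Discrete measurable structure on the permutations of `Fin n`. -/
instance permMeasurableSpace (n : ℕ) : MeasurableSpace (Equiv.Perm (Fin n)) := ⊤

open Finset
open scoped BigOperators

lemma Finset.sum_offDiag {α M : Type*} [DecidableEq α] [AddCommGroup M] (s : Finset α)
    (f : α → α → M) :
    ∑ x ∈ s.offDiag, f x.1 x.2 = ∑ i ∈ s, ∑ j ∈ s, f i j - ∑ i ∈ s, f i i := by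
  rw [← sum_product', ← diag_union_offDiag, sum_union (disjoint_diag_offDiag _), sum_diag]
  abel

namespace Equiv.Perm

variable {α M : Type*} [Fintype α] [DecidableEq α] [AddCommMonoid M] [Module ℚ≥0 M]

lemma expect_apply (g : α → M) (i : α) : 𝔼 p : Perm α, g (p i) = 𝔼 j, g j := by
  have hconst : ∀ i', 𝔼 p : Perm α, g (p i') = 𝔼 p : Perm α, g (p i) := fun i' =>
    Fintype.expect_equiv (Equiv.mulRight (swap i' i)) _ _ fun p => by simp
  have : Nonempty α := ⟨i⟩
  calc 𝔼 p : Perm α, g (p i) = 𝔼 i', 𝔼 p : Perm α, g (p i') := by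
        simp only [hconst, Fintype.expect_const]
    _ = 𝔼 p : Perm α, 𝔼 i', g (p i') := expect_comm _ _ _
    _ = 𝔼 j, g j := by
      simp only [fun p : Perm α => Fintype.expect_equiv p (fun i' => g (p i')) g fun _ => rfl,
        Fintype.expect_const]

lemma expect_apply_apply (g : α → α → M) {i k : α} (hik : i ≠ k) :
    𝔼 p : Perm α, g (p i) (p k) = 𝔼 x ∈ univ.offDiag, g x.1 x.2 := by
  have hconst : ∀ x ∈ (univ : Finset α).offDiag,
      𝔼 p : Perm α, g (p x.1) (p x.2) = 𝔼 p : Perm α, g (p i) (p k) := by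
    intro x hx
    have hx' : x.1 ≠ x.2 := by simpa using hx
    obtain ⟨σ, hσ⟩ := Perm.exists_extending_pair ![i, k] ![x.1, x.2]
      (by intro a b; fin_cases a <;> fin_cases b <;> simp [hik, hik.symm])
      (by intro a b; fin_cases a <;> fin_cases b <;> simp [hx', hx'.symm])
    refine Fintype.expect_equiv (Equiv.mulRight σ) _ _ fun p => ?_
    simpa using (congrArg₂ (fun a b => g (p a) (p b)) (hσ 0) (hσ 1)).symm
  have hne : (univ : Finset α).offDiag.Nonempty := ⟨(i, k), by simpa using hik⟩
  calc 𝔼 p : Perm α, g (p i) (p k)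
      = 𝔼 x ∈ univ.offDiag, 𝔼 p : Perm α, g (p x.1) (p x.2) := by
        rw [expect_congr rfl hconst, expect_const hne]
    _ = 𝔼 p : Perm α, 𝔼 x ∈ univ.offDiag, g (p x.1) (p x.2) := expect_comm _ _ _
    _ = 𝔼 x ∈ univ.offDiag, g x.1 x.2 := by
      rw [← Fintype.expect_const (ι := Perm α) (𝔼 x ∈ univ.offDiag, g x.1 x.2)]
      refine expect_congr rfl fun p _ => ?_
      exact expect_equiv (Equiv.prodCongr p p) (by simp) (fun _ _ => rfl)

lemma expect_sq_sum_apply_of_sum_eq_zero {K : Type*} [Field K] [CharZero K] [Nontrivial α]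
    (a : α → α → K) (hrow : ∀ i, ∑ j, a i j = 0) (hcol : ∀ j, ∑ i, a i j = 0) :
    𝔼 p : Perm α, (∑ i, a i (p i)) ^ 2 = (∑ i, ∑ j, a i j ^ 2) / (Fintype.card α - 1) := by
  set n : K := (Fintype.card α : K)
  have hn0 : n ≠ 0 := Nat.cast_ne_zero.mpr Fintype.card_ne_zero
  have hn1 : n - 1 ≠ 0 := sub_ne_zero.mpr (Nat.cast_ne_one.mpr (Fintype.one_lt_card (α := α)).ne')
  set G : α → α → K := fun i k => ∑ j, a i j * a k j
  have hdiag : ∀ i, 𝔼 p : Perm α, a i (p i) * a i (p i) = G i i / n := fun i => by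
    rw [expect_apply (fun j => a i j * a i j), Fintype.expect_eq_sum_div_card]
  have hoff : ∀ i k, i ≠ k → 𝔼 p : Perm α, a i (p i) * a k (p k) = -G i k / (n * (n - 1)) := by
    intro i k hik
    rw [expect_apply_apply (fun j l => a i j * a k l) hik, expect_eq_sum_div_card,
      sum_offDiag _ (fun j l => a i j * a k l), offDiag_card, Nat.cast_sub (Nat.le_mul_self _)]
    simp [G, ← mul_sum, hrow, n, mul_sub]
  have hG : ∀ i, ∑ k, G i k = 0 := fun i => by
    simp only [G]
    rw [sum_comm]
    simp [← mul_sum, hcol]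
  calc 𝔼 p : Perm α, (∑ i, a i (p i)) ^ 2
      = ∑ i, ∑ k, 𝔼 p : Perm α, a i (p i) * a k (p k) := by
        simp_rw [sq, sum_mul_sum, expect_sum_comm]
    _ = ∑ i, (G i i / n + ∑ k ∈ univ.erase i, -G i k / (n * (n - 1))) := by
        refine sum_congr rfl fun i _ => ?_
        rw [← add_sum_erase _ _ (mem_univ i), hdiag]
        congr 1
        exact sum_congr rfl fun k hk => hoff i k (ne_of_mem_erase hk).symm
    _ = ∑ i, G i i / (n - 1) := by
        refine sum_congr rfl fun i _ => ?_
        rw [← sum_div, sum_neg_distrib, sum_erase_eq_sub (mem_univ i), hG]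
        field_simp
        ring
    _ = (∑ i, ∑ j, a i j ^ 2) / (n - 1) := by
        simp [G, sum_div, sq]

end Equiv.Perm

section RandomIndex

variable {Ω ι : Type*} [Fintype ι] {π : Ω → ι} {Z : ι → Ω → ℝ}

lemma apply_comp_eq_sum_indicator_preimage (ω : Ω) :
    Z (π ω) ω = ∑ i, (π ⁻¹' {i}).indicator (Z i) ω := by
  classical
  simp [Set.indicator_apply]

variable [MeasurableSpace Ω] {μ : Measure Ω} [MeasurableSpace ι] [MeasurableSingletonClass ι]

lemma integrable_apply_comp (hπ : Measurable π) (hZ : ∀ i, Integrable (Z i) μ) :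
    Integrable (fun ω => Z (π ω) ω) μ := by
  simp_rw [apply_comp_eq_sum_indicator_preimage]
  exact integrable_finsetSum _ fun i _ => (hZ i).indicator (hπ (measurableSet_singleton i))

lemma integral_apply_comp_of_indepFun (hπ : Measurable π)
    (hunif : ∀ i, μ (π ⁻¹' {i}) = (Fintype.card ι : ENNReal)⁻¹)
    (hindep : ∀ i, π ⟂ᵢ[μ] Z i) (hZ : ∀ i, Integrable (Z i) μ) :
    ∫ ω, Z (π ω) ω ∂μ = 𝔼 i, ∫ ω, Z i ω ∂μ := by
  have hterm : ∀ i, ∫ ω, (π ⁻¹' {i}).indicator (Z i) ω ∂μ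
      = (Fintype.card ι : ℝ)⁻¹ * ∫ ω, Z i ω ∂μ := by
    intro i
    have hsing : MeasurableSet (π ⁻¹' {i}) := hπ (measurableSet_singleton i)
    have hmeas : Measurable (({i} : Set ι).indicator (1 : ι → ℝ)) :=
      measurable_one.indicator (measurableSet_singleton i)
    have hI : (π ⁻¹' {i}).indicator 1 ⟂ᵢ[μ] Z i := (hindep i).comp hmeas measurable_id
    calc ∫ ω, (π ⁻¹' {i}).indicator (Z i) ω ∂μ
        = ∫ ω, (π ⁻¹' {i}).indicator 1 ω * Z i ω ∂μ := by
          congr with ω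
          by_cases h : ω ∈ π ⁻¹' {i} <;> simp [h]
      _ = μ.real (π ⁻¹' {i}) * ∫ ω, Z i ω ∂μ := by
          rw [hI.integral_fun_mul_eq_mul_integral
            (measurable_one.indicator hsing).aestronglyMeasurable (hZ i).aestronglyMeasurable,
            integral_indicator_one hsing]
      _ = (Fintype.card ι : ℝ)⁻¹ * ∫ ω, Z i ω ∂μ := by
          simp [measureReal_def, hunif]
  simp_rw [apply_comp_eq_sum_indicator_preimage (Z := Z)]
  rw [integral_finsetSum _ fun i _ => (hZ i).indicator (hπ (measurableSet_singleton i))]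
  simp only [hterm, Fintype.expect_eq_sum_div_card, ← mul_sum]
  exact inv_mul_eq_div _ _

end RandomIndex

lemma integral_sq_sum_eq_sum_variance_add_sq {Ω ι : Type*} [MeasurableSpace Ω] {μ : Measure Ω}
    [IsProbabilityMeasure μ] {s : Finset ι} {Y : ι → Ω → ℝ} (hY : ∀ i ∈ s, MemLp (Y i) 2 μ)
    (hindep : Set.Pairwise ↑s fun i j => Y i ⟂ᵢ[μ] Y j) :
    ∫ ω, (∑ i ∈ s, Y i ω) ^ 2 ∂μ = ∑ i ∈ s, Var[Y i; μ] + (∑ i ∈ s, ∫ ω, Y i ω ∂μ) ^ 2 := by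
  have hvar := variance_eq_sub (memLp_finsetSum' s hY)
  rw [IndepFun.variance_sum hY hindep] at hvar
  simp only [Finset.sum_apply, Pi.pow_apply] at hvar
  rw [hvar, ← integral_finsetSum _ fun i hi => (hY i hi).integrable one_le_two]
  ring

section CombinatorialSum

variable {Ω α : Type*} [MeasurableSpace Ω] {μ : Measure Ω} [Fintype α]
  [MeasurableSpace (Equiv.Perm α)] {X : α → α → Ω → ℝ} {π : Ω → Equiv.Perm α}

lemma indepFun_sum_apply_perm (hindep : π ⟂ᵢ[μ] fun ω (ij : α × α) => X ij.1 ij.2 ω)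
    (p : Equiv.Perm α) : π ⟂ᵢ[μ] fun ω => ∑ i, X i (p i) ω :=
  hindep.comp measurable_id
    (Finset.measurable_sum (f := fun i (v : α × α → ℝ) => v (i, p i)) univ
      fun _ _ => measurable_pi_apply _)

variable [DecidableEq α] [MeasurableSingletonClass (Equiv.Perm α)]

lemma integral_combinatorialSum (hπ : Measurable π)
    (hunif : ∀ p, μ (π ⁻¹' {p}) = (Fintype.card (Equiv.Perm α) : ENNReal)⁻¹)
    (hindep : π ⟂ᵢ[μ] fun ω (ij : α × α) => X ij.1 ij.2 ω) (hX : ∀ i j, Integrable (X i j) μ) :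
    ∫ ω, ∑ i, X i (π ω i) ω ∂μ = (∑ i, ∑ j, ∫ ω, X i j ω ∂μ) / Fintype.card α := by
  refine (integral_apply_comp_of_indepFun (Z := fun p ω => ∑ i, X i (p i) ω) hπ hunif
    (indepFun_sum_apply_perm hindep)
    (fun p => integrable_finsetSum _ fun i _ => hX i (p i))).trans ?_
  rw [expect_congr rfl fun p _ => integral_finsetSum _ fun i _ => hX i (p i), expect_sum_comm,
    sum_div]
  exact sum_congr rfl fun i _ => by
    rw [Equiv.Perm.expect_apply (fun j => ∫ ω, X i j ω ∂μ), Fintype.expect_eq_sum_div_card]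

lemma integral_sq_combinatorialSum [IsProbabilityMeasure μ] (hπ : Measurable π)
    (hunif : ∀ p, μ (π ⁻¹' {p}) = (Fintype.card (Equiv.Perm α) : ENNReal)⁻¹)
    (hindep : π ⟂ᵢ[μ] fun ω (ij : α × α) => X ij.1 ij.2 ω)
    (hXindep : iIndepFun (fun (ij : α × α) ω => X ij.1 ij.2 ω) μ)
    (hX : ∀ i j, MemLp (X i j) 2 μ) :
    ∫ ω, (∑ i, X i (π ω i) ω) ^ 2 ∂μ
      = (∑ i, ∑ j, Var[X i j; μ]) / Fintype.card α
        + 𝔼 p : Equiv.Perm α, (∑ i, ∫ ω, X i (p i) ω ∂μ) ^ 2 := by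
  have hsq_indep : ∀ p : Equiv.Perm α, π ⟂ᵢ[μ] fun ω => (∑ i, X i (p i) ω) ^ 2 := fun p =>
    (indepFun_sum_apply_perm hindep p).comp measurable_id (measurable_id.pow_const 2)
  have hsq_int : ∀ p : Equiv.Perm α, Integrable (fun ω => (∑ i, X i (p i) ω) ^ 2) μ := fun p =>
    (memLp_finsetSum _ fun i _ => hX i (p i)).integrable_sq
  refine (integral_apply_comp_of_indepFun hπ hunif hsq_indep hsq_int).trans ?_
  have hpair : ∀ p : Equiv.Perm α,
      Set.Pairwise ↑(univ : Finset α) fun i k => X i (p i) ⟂ᵢ[μ] X k (p k) :=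
    fun p i _ k _ hik => hXindep.indepFun (i := (i, p i)) (j := (k, p k)) (by simp [hik])
  rw [expect_congr rfl fun p _ =>
    integral_sq_sum_eq_sum_variance_add_sq (fun i _ => hX i (p i)) (hpair p),
    expect_add_distrib, expect_sum_comm, sum_div]
  congr 1
  exact sum_congr rfl fun i _ => by
    rw [Equiv.Perm.expect_apply (fun j => Var[X i j; μ]), Fintype.expect_eq_sum_div_card]

theorem variance_combinatorialSum [IsProbabilityMeasure μ] [Nontrivial α] (hπ : Measurable π)
    (hunif : ∀ p, μ (π ⁻¹' {p}) = (Fintype.card (Equiv.Perm α) : ENNReal)⁻¹)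
    (hindep : π ⟂ᵢ[μ] fun ω (ij : α × α) => X ij.1 ij.2 ω)
    (hXindep : iIndepFun (fun (ij : α × α) ω => X ij.1 ij.2 ω) μ)
    (hX : ∀ i j, MemLp (X i j) 2 μ)
    (hrow : ∀ i, ∑ j, ∫ ω, X i j ω ∂μ = 0) (hcol : ∀ j, ∑ i, ∫ ω, X i j ω ∂μ = 0) :
    Var[fun ω => ∑ i, X i (π ω i) ω; μ]
      = (∑ i, ∑ j, Var[X i j; μ]) / Fintype.card α
        + (∑ i, ∑ j, (∫ ω, X i j ω ∂μ) ^ 2) / (Fintype.card α - 1) := by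
  have hint : ∀ p : Equiv.Perm α, Integrable (fun ω => ∑ i, X i (p i) ω) μ :=
    fun p => integrable_finsetSum _ fun i _ => (hX i (p i)).integrable one_le_two
  have hsq_int : ∀ p : Equiv.Perm α, Integrable (fun ω => (∑ i, X i (p i) ω) ^ 2) μ := fun p =>
    (memLp_finsetSum _ fun i _ => hX i (p i)).integrable_sq
  have hL2 : MemLp (fun ω => ∑ i, X i (π ω i) ω) 2 μ :=
    (memLp_two_iff_integrable_sq (integrable_apply_comp hπ hint).aestronglyMeasurable).mpr
      (integrable_apply_comp hπ hsq_int)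
  have hmean : ∫ ω, ∑ i, X i (π ω i) ω ∂μ = 0 := by
    rw [integral_combinatorialSum hπ hunif hindep fun i j => (hX i j).integrable one_le_two]
    simp [hrow]
  rw [variance_eq_sub hL2]
  simp only [Pi.pow_apply]
  rw [hmean, integral_sq_combinatorialSum hπ hunif hindep hXindep hX,
    Equiv.Perm.expect_sq_sum_apply_of_sum_eq_zero _ hrow hcol]
  ring

end CombinatorialSum

/-- Under the combinatorial-sum setup with the centering condition (10),
`Var S_n = (1/(n(n−1))) Σ_{i,j} (E X_{nij})² + (1/n) Σ_{i,j} E X_{nij}²`. -/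
theorem combinatorial_sum_variance
    {Ω : Type} [MeasurableSpace Ω] (μ : Measure Ω) [IsProbabilityMeasure μ]
    (n : ℕ) (hn : 2 ≤ n)
    (X : Fin n → Fin n → Ω → ℝ) (hXmeas : ∀ i j, Measurable (X i j))
    (hmom : ∀ i j (k : ℕ), Integrable (fun ω => |X i j ω| ^ k) μ)
    (π : Ω → Equiv.Perm (Fin n)) (hπmeas : Measurable π)
    (hπunif : ∀ p : Equiv.Perm (Fin n), μ {ω | π ω = p} = ((Nat.factorial n : ENNReal))⁻¹)
    (hXindep : iIndepFun
      (fun (ij : Fin n × Fin n) ω => X ij.1 ij.2 ω) μ)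
    (hπindep : IndepFun π (fun ω (ij : Fin n × Fin n) => X ij.1 ij.2 ω) μ)
    (hcent : (∀ j, ∑ i, ∫ ω, X i j ω ∂μ = 0) ∧ (∀ i, ∑ j, ∫ ω, X i j ω ∂μ = 0))
    (S : Ω → ℝ) (hS : ∀ ω, S ω = ∑ i, X i (π ω i) ω) :
    variance S μ
      = (1 / (n * (n - 1)) : ℝ) * ∑ i, ∑ j, (∫ ω, X i j ω ∂μ) ^ 2
        + (1 / n : ℝ) * ∑ i, ∑ j, ∫ ω, (X i j ω) ^ 2 ∂μ := by
  have hXL2 : ∀ i j, MemLp (X i j) 2 μ := fun i j =>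
    (memLp_two_iff_integrable_sq (hXmeas i j).aestronglyMeasurable).mpr (by simpa using hmom i j 2)
  have hunif : ∀ p, μ (π ⁻¹' {p}) = (Fintype.card (Equiv.Perm (Fin n)) : ENNReal)⁻¹ := fun p => by
    rw [Fintype.card_perm, Fintype.card_fin]
    exact hπunif p
  have : Nontrivial (Fin n) := Fin.nontrivial_iff_two_le.mpr hn
  have hvar : ∀ i j, Var[X i j; μ] = ∫ ω, X i j ω ^ 2 ∂μ - (∫ ω, X i j ω ∂μ) ^ 2 := fun i j => by
    simpa using variance_eq_sub (hXL2 i j)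
  have hn0 : (n : ℝ) ≠ 0 := by positivity
  have hn1 : (n : ℝ) - 1 ≠ 0 := by
    have : (2 : ℝ) ≤ n := by exact_mod_cast hn
    linarith
  rw [show S = fun ω => ∑ i, X i (π ω i) ω from funext hS,
    variance_combinatorialSum hπmeas hunif hπindep hXindep hXL2 hcent.2 hcent.1]
  simp only [hvar, Fintype.card_fin, sum_sub_distrib]
  field_simp
  ring
end

section
/- Let x > 0 and let φ be a function analytic on the closed disc |z| ≤ 16x in the complex plane with φ(0) = 1. Suppose that sup_{|z| ≤ 8x} |e^{−z²/2} φ(z) − 1| ≤ g for some 0 ≤ g < 1. Then φ has no zeros in the closed disc |z| ≤ 4x, and there is an absolute constant C > 0 such that for every z with |z| ≤ 4x, |φ'(z)/φ(z) − z| ≤ C g / (x (1 − g)). -/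
open Complex Metric

/-! `F(z) = e^{-z²/2} φ(z)` stays within `g < 1` of `1` on the disc of radius `8x`, so it has no
zeros there and `|F| ≥ 1 - g`. Its logarithmic derivative is `φ'/φ - z`, and Cauchy's estimate
for `F - 1` on the disc of radius `4x` about a point `z` with `|z| ≤ 4x` gives `|F'(z)| ≤ g / (4x)`.
Hence the constant `C = 1/4` works. -/

lemma one_sub_le_norm_of_norm_sub_one_le {R : Type*} [SeminormedRing R] [NormOneClass R] {c : R}
    {g : ℝ} (h : ‖c - 1‖ ≤ g) : 1 - g ≤ ‖c‖ := by
  have := norm_sub_norm_le (1 : R) c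
  rw [norm_one, norm_sub_rev] at this
  linarith

lemma ne_zero_of_norm_sub_one_le {R : Type*} [NormedRing R] [NormOneClass R] {c : R} {g : ℝ}
    (hg : g < 1) (h : ‖c - 1‖ ≤ g) : c ≠ 0 :=
  norm_pos_iff.mp ((sub_pos.2 hg).trans_le (one_sub_le_norm_of_norm_sub_one_le h))

lemma norm_logDeriv_le_of_norm_sub_one_le {F : ℂ → ℂ} {z : ℂ} {r g : ℝ} (hr : 0 < r) (hg : g < 1)
    (hF : DifferentiableOn ℂ F (closedBall z r)) (hFg : ∀ w ∈ closedBall z r, ‖F w - 1‖ ≤ g) :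
    ‖logDeriv F z‖ ≤ g / (r * (1 - g)) := by
  have hFz := hFg z (mem_closedBall_self hr.le)
  have hderiv : ‖deriv F z‖ ≤ g / r := by
    rw [← deriv_sub_const (1 : ℂ)]
    exact norm_deriv_le_of_forall_mem_sphere_norm_le hr
      ((hF.sub_const 1).diffContOnCl_ball subset_rfl) fun w hw ↦ hFg w (sphere_subset_closedBall hw)
  have hg0 : 0 ≤ g := (norm_nonneg _).trans hFz
  rw [logDeriv_apply, norm_div, ← div_div]
  exact div_le_div₀ (by positivity) hderiv (sub_pos.2 hg) (one_sub_le_norm_of_norm_sub_one_le hFz)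

lemma logDeriv_cexp_neg_sq_div_two_mul {φ : ℂ → ℂ} {z : ℂ} (hφ : DifferentiableAt ℂ φ z)
    (hφz : φ z ≠ 0) : logDeriv (fun w ↦ cexp (-w ^ 2 / 2) * φ w) z = logDeriv φ z - z := by
  have hgauss : logDeriv (fun w : ℂ ↦ cexp (-w ^ 2 / 2)) z = -z := by
    rw [← Function.comp_def cexp, logDeriv_comp differentiableAt_exp (by fun_prop),
      Complex.logDeriv_exp]
    simp only [Pi.one_apply, one_mul, deriv_div_const, deriv.fun_neg', differentiableAt_fun_id,
      deriv_fun_pow, deriv_id'', mul_one]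
    ring
  rw [logDeriv_mul (f := fun w ↦ cexp (-w ^ 2 / 2)) z (exp_ne_zero _) hφz (by fun_prop) hφ, hgauss]
  ring

/-- If `φ` is analytic on the closed disc `|z| ≤ 16x` with `φ(0) = 1` and
`|e^{−z²/2} φ(z) − 1| ≤ g < 1` on the closed disc `|z| ≤ 8x`, then `φ` has no zeros in the
closed disc `|z| ≤ 4x`, and there is an absolute constant `C > 0` such that
`|φ'(z)/φ(z) − z| ≤ C g / (x (1 − g))` for all `|z| ≤ 4x`. -/
theorem log_deriv_close_to_id_of_close_to_gaussian :
    (∀ (x : ℝ), 0 < x → ∀ (φ : ℂ → ℂ), AnalyticOnNhd ℂ φ (closedBall 0 (16 * x)) →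
      φ 0 = 1 → ∀ (g : ℝ), 0 ≤ g → g < 1 →
      (∀ z ∈ closedBall (0 : ℂ) (8 * x), ‖Complex.exp (-z ^ 2 / 2) * φ z - 1‖ ≤ g) →
      ∀ z ∈ closedBall (0 : ℂ) (4 * x), φ z ≠ 0) ∧
    ∃ C > (0 : ℝ),
      ∀ (x : ℝ), 0 < x → ∀ (φ : ℂ → ℂ), AnalyticOnNhd ℂ φ (closedBall 0 (16 * x)) →
      φ 0 = 1 → ∀ (g : ℝ), 0 ≤ g → g < 1 →
      (∀ z ∈ closedBall (0 : ℂ) (8 * x), ‖Complex.exp (-z ^ 2 / 2) * φ z - 1‖ ≤ g) →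
      ∀ z ∈ closedBall (0 : ℂ) (4 * x),
        ‖deriv φ z / φ z - z‖ ≤ C * g / (x * (1 - g)) := by
  refine ⟨fun x _ φ _ _ g _ hg hclose z hz ↦ ?_, 1 / 4, by norm_num,
    fun x hx φ hφ _ g _ hg hclose z hz ↦ ?_⟩
  · exact right_ne_zero_of_mul <| ne_zero_of_norm_sub_one_le hg <|
      hclose z (closedBall_subset_closedBall (by linarith) hz)
  · have hball : closedBall z (4 * x) ⊆ closedBall 0 (8 * x) :=
      closedBall_subset_closedBall' (by rw [mem_closedBall] at hz; linarith)
    have hz8 : z ∈ closedBall 0 (8 * x) := hball (mem_closedBall_self (by positivity))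
    have hφ8 : ∀ w ∈ closedBall 0 (8 * x), DifferentiableAt ℂ φ w := fun w hw ↦
      (hφ w (closedBall_subset_closedBall (by linarith) hw)).differentiableAt
    have hφz : φ z ≠ 0 := right_ne_zero_of_mul (ne_zero_of_norm_sub_one_le hg (hclose z hz8))
    calc ‖deriv φ z / φ z - z‖
        = ‖logDeriv (fun w ↦ cexp (-w ^ 2 / 2) * φ w) z‖ := by
          rw [logDeriv_cexp_neg_sq_div_two_mul (hφ8 z hz8) hφz, logDeriv_apply]
      _ ≤ g / (4 * x * (1 - g)) :=
          norm_logDeriv_le_of_norm_sub_one_le (by positivity) hg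
            (fun w hw ↦ ((by fun_prop : DifferentiableAt ℂ (fun w : ℂ ↦ cexp (-w ^ 2 / 2)) w).mul
              (hφ8 w (hball hw))).differentiableWithinAt)
            fun w hw ↦ hclose w (hball hw)
      _ = 1 / 4 * g / (x * (1 - g)) := by rw [mul_assoc, ← div_div]; ring
end

section
/- Let x > 0 and let φ be a function analytic on the closed disc |z| ≤ 16x in the complex plane with φ(0) = 1. Suppose that sup_{|z| ≤ 8x} |e^{−z²/2} φ(z) − 1| ≤ g for some 0 ≤ g < 1. Then there is an absolute constant C > 0 such that for every z with |z| ≤ 4x, |φ''(z)/φ(z) − (φ'(z)/φ(z))² − 1| ≤ C (g + g²) / (x² (1 − g)²). -/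
/-!
Write `φ = e^{z²/2} h` with `h z = e^{-z²/2} φ z`. Taking two logarithmic derivatives,
`(log φ)'' = 1 + (log h)''`, so the quantity to bound is `(log h)'' = h''/h - (h'/h)²`.
Since `‖h - 1‖ ≤ g` on the disc of radius `8x`, Cauchy's estimate on discs of radius `2x` gives
`‖h'‖ ≤ g / (2x)` on the disc of radius `6x`, and then `‖h''‖ ≤ g / (4x²)` on the disc of
radius `4x`, while `‖h‖ ≥ 1 - g` there.
-/

open Complex Metric
open Filter Topology

theorem deriv_logDeriv {𝕜 : Type*} [NontriviallyNormedField 𝕜] {f : 𝕜 → 𝕜} {z : 𝕜}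
    (hf' : DifferentiableAt 𝕜 (deriv f) z) (hf : DifferentiableAt 𝕜 f z) (h0 : f z ≠ 0) :
    deriv (logDeriv f) z = deriv (deriv f) z / f z - (deriv f z / f z) ^ 2 := by
  unfold logDeriv
  rw [deriv_div hf' hf h0]
  field_simp

theorem logDeriv_cexp_mul {q h : ℂ → ℂ} {z : ℂ} (hq : DifferentiableAt ℂ q z)
    (hh : DifferentiableAt ℂ h z) (h0 : h z ≠ 0) :
    logDeriv (fun w => cexp (q w) * h w) z = deriv q z + logDeriv h z := by
  rw [logDeriv_mul (f := fun w => cexp (q w)) z (exp_ne_zero _) h0 hq.cexp hh, logDeriv_apply,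
    deriv_cexp hq, mul_div_cancel_left₀ _ (exp_ne_zero _)]

theorem deriv_logDeriv_cexp_mul {q h : ℂ → ℂ} {z : ℂ} (hq : AnalyticAt ℂ q z)
    (hh : AnalyticAt ℂ h z) (h0 : h z ≠ 0) :
    deriv (logDeriv fun w => cexp (q w) * h w) z = deriv (deriv q) z + deriv (logDeriv h) z := by
  have hlog : logDeriv (fun w => cexp (q w) * h w) =ᶠ[𝓝 z] fun w => deriv q w + logDeriv h w := by
    filter_upwards [hq.eventually_analyticAt, hh.eventually_analyticAt,
      hh.continuousAt.eventually_ne h0] with w hqw hhw hw0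
    exact logDeriv_cexp_mul hqw.differentiableAt hhw.differentiableAt hw0
  have hlogh : DifferentiableAt ℂ (logDeriv h) z :=
    hh.deriv.differentiableAt.div hh.differentiableAt h0
  rw [hlog.deriv_eq]
  exact deriv_add hq.deriv.differentiableAt hlogh

theorem deriv_deriv_sq_div_two (z : ℂ) : deriv (deriv fun w : ℂ => w ^ 2 / 2) z = 1 := by
  have : deriv (fun w : ℂ => w ^ 2 / 2) = id := by
    funext w
    simp
  simp [this]

theorem deriv_deriv_div_sub_sq_sub_one_of_eq_gaussian_mul {φ h : ℂ → ℂ} {z : ℂ}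
    (hφh : φ = fun w => cexp (w ^ 2 / 2) * h w) (hh : AnalyticAt ℂ h z) (h0 : h z ≠ 0) :
    deriv (deriv φ) z / φ z - (deriv φ z / φ z) ^ 2 - 1
      = deriv (deriv h) z / h z - (deriv h z / h z) ^ 2 := by
  have hq : AnalyticAt ℂ (fun w : ℂ => w ^ 2 / 2) z := by fun_prop
  have hφ : AnalyticAt ℂ φ z := hφh ▸ (analyticAt_cexp.comp hq).mul hh
  have hφ0 : φ z ≠ 0 := hφh ▸ mul_ne_zero (exp_ne_zero _) h0
  have := deriv_logDeriv_cexp_mul hq hh h0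
  rw [← hφh, deriv_deriv_sq_div_two,
    deriv_logDeriv hφ.deriv.differentiableAt hφ.differentiableAt hφ0,
    deriv_logDeriv hh.deriv.differentiableAt hh.differentiableAt h0] at this
  linear_combination this

theorem norm_deriv_le_of_forall_mem_closedBall_norm_sub_le {F : Type*} [NormedAddCommGroup F]
    [NormedSpace ℂ F] {f : ℂ → F} {a : F} {c w : ℂ} {R r M : ℝ} (hr : 0 < r)
    (hf : DifferentiableOn ℂ f (closedBall c R)) (hM : ∀ u ∈ closedBall c R, ‖f u - a‖ ≤ M)
    (hw : dist w c + r ≤ R) : ‖deriv f w‖ ≤ M / r := by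
  have hsub : closedBall w r ⊆ closedBall c R :=
    closedBall_subset_closedBall' (by linarith)
  have hdc : DiffContOnCl ℂ (fun u => f u - a) (ball w r) :=
    ((hf.mono hsub).sub_const a |>.mono closure_ball_subset_closedBall).diffContOnCl
  simpa using norm_deriv_le_of_forall_mem_sphere_norm_le hr hdc
    fun u hu => hM u (hsub (sphere_subset_closedBall hu))

theorem norm_div_sub_div_sq_le {𝕜 : Type*} [NormedField 𝕜] {A B H : 𝕜} {a b η : ℝ}
    (hη : 0 < η) (hA : ‖A‖ ≤ a) (hB : ‖B‖ ≤ b) (hH : η ≤ ‖H‖) :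
    ‖A / H - (B / H) ^ 2‖ ≤ a / η + (b / η) ^ 2 :=
  calc ‖A / H - (B / H) ^ 2‖ ≤ ‖A / H‖ + ‖(B / H) ^ 2‖ := norm_sub_le _ _
    _ = ‖A‖ / ‖H‖ + (‖B‖ / ‖H‖) ^ 2 := by rw [norm_div, norm_pow, norm_div]
    _ ≤ a / η + (b / η) ^ 2 := by
      have := (norm_nonneg A).trans hA
      have := (norm_nonneg B).trans hB
      gcongr

/-- If `φ` is analytic on the closed disc `|z| ≤ 16x` with `φ(0) = 1` and
`|e^{−z²/2} φ(z) − 1| ≤ g < 1` on the closed disc `|z| ≤ 8x`, then there is an absolute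
constant `C > 0` such that `|φ''(z)/φ(z) − (φ'(z)/φ(z))² − 1| ≤ C (g + g²) / (x² (1 − g)²)`
for all `|z| ≤ 4x`. -/
theorem second_log_deriv_close_to_one_of_close_to_gaussian :
    ∃ C > (0 : ℝ),
      ∀ (x : ℝ), 0 < x → ∀ (φ : ℂ → ℂ), AnalyticOnNhd ℂ φ (closedBall 0 (16 * x)) →
      φ 0 = 1 → ∀ (g : ℝ), 0 ≤ g → g < 1 →
      (∀ z ∈ closedBall (0 : ℂ) (8 * x), ‖Complex.exp (-z ^ 2 / 2) * φ z - 1‖ ≤ g) →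
      ∀ z ∈ closedBall (0 : ℂ) (4 * x),
        ‖deriv (deriv φ) z / φ z - (deriv φ z / φ z) ^ 2 - 1‖
          ≤ C * (g + g ^ 2) / (x ^ 2 * (1 - g) ^ 2) := by
  refine ⟨1 / 4, by norm_num, fun x hx φ hφ _ g hg0 hg1 hbound z hz => ?_⟩
  set h : ℂ → ℂ := fun w => cexp (-w ^ 2 / 2) * φ w
  have hh : AnalyticOnNhd ℂ h (closedBall 0 (16 * x)) := fun w hw =>
    (analyticAt_cexp.comp (by fun_prop)).mul (hφ w hw)
  have hφh : φ = fun w => cexp (w ^ 2 / 2) * h w := by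
    funext w
    rw [← mul_assoc, ← exp_add, show w ^ 2 / 2 + -w ^ 2 / 2 = 0 by ring, exp_zero, one_mul]
  have hzx : ‖z‖ ≤ 4 * x := mem_closedBall_zero_iff.mp hz
  have hz16 : z ∈ closedBall (0 : ℂ) (16 * x) := mem_closedBall_zero_iff.mpr (by linarith)
  have hhz : 1 - g ≤ ‖h z‖ := by
    have := norm_le_norm_add_norm_sub (h z) 1
    rw [norm_one] at this
    linarith [hbound z (mem_closedBall_zero_iff.mpr (by linarith))]
  have hhz0 : h z ≠ 0 := norm_pos_iff.mp (by linarith)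
  have hd1 : ∀ w, ‖w‖ ≤ 6 * x → ‖deriv h w‖ ≤ g / (2 * x) := fun w hw =>
    norm_deriv_le_of_forall_mem_closedBall_norm_sub_le (by linarith)
      (hh.differentiableOn.mono (closedBall_subset_closedBall (by linarith))) hbound
      (by rw [dist_zero_right]; linarith)
  have hd2 : ‖deriv (deriv h) z‖ ≤ g / (2 * x) / (2 * x) :=
    norm_deriv_le_of_forall_mem_closedBall_norm_sub_le (a := 0) (R := 6 * x) (by linarith)
      (hh.deriv.differentiableOn.mono (closedBall_subset_closedBall (by linarith)))
      (fun u hu => by simpa using hd1 u (mem_closedBall_zero_iff.mp hu))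
      (by rw [dist_zero_right]; linarith)
  rw [deriv_deriv_div_sub_sq_sub_one_of_eq_gaussian_mul hφh (hh z hz16) hhz0]
  refine (norm_div_sub_div_sq_le (by linarith) hd2 (hd1 z (by linarith)) hhz).trans ?_
  have hsum : g / (2 * x) / (2 * x) / (1 - g) + (g / (2 * x) / (1 - g)) ^ 2
      = 1 / 4 * g / (x ^ 2 * (1 - g) ^ 2) := by
    field_simp
    ring
  rw [hsum]
  gcongr
  linarith [sq_nonneg g]
end

section
/- Let F be the distribution function of a real random variable, let Φ be the standard normal distribution function, set R = F − Φ and Δ = sup_{v ∈ ℝ} |R(v)|. Then for every h > 0 and every real a, the Lebesgue–Stieltjes integral satisfies |∫_{[a,∞)} e^{−h v} dR(v)| ≤ 2 Δ e^{−h a}; in particular, if a ≥ 0 then |∫_{[a,∞)} e^{−h v} dR(v)| ≤ 2 Δ. -/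
/-!
By the layer-cake formula, `∫_{[a,∞)} e^{-hv} dμ(v) = ∫_0^{e^{-ha}} μ[a, -(log t)/h) dt`.
The mass of a half-open interval `[a, b)` is a difference of two left limits of the
distribution function, so when two distribution functions are uniformly `Δ`-close the
integrands differ by at most `2Δ`, and the outer integral runs over an interval of length
`e^{-ha}`.
-/

open MeasureTheory Real Set ProbabilityTheory Filter Topology

lemma leftLim_cdf (μ : Measure ℝ) [IsProbabilityMeasure μ] (x : ℝ) :
    Function.leftLim (cdf μ) x = μ.real (Iio x) := by
  have hIio := (cdf μ).measure_Iio (tendsto_cdf_atBot μ) x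
  rw [measure_cdf, sub_zero] at hIio
  rw [measureReal_def, hIio, ENNReal.toReal_ofReal]
  exact (cdf_nonneg μ (x - 1)).trans ((monotone_cdf μ).le_leftLim (sub_one_lt x))

lemma tendsto_measureReal_Iic_nhdsLT (μ : Measure ℝ) [IsProbabilityMeasure μ] (x : ℝ) :
    Tendsto (fun y ↦ μ.real (Iic y)) (𝓝[<] x) (𝓝 (μ.real (Iio x))) := by
  simpa only [← cdf_eq_real, ← leftLim_cdf] using (monotone_cdf μ).tendsto_leftLim x

lemma setOf_lt_exp_neg_mul {h t : ℝ} (hh : 0 < h) (ht : 0 < t) :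
    {v : ℝ | t < exp (-h * v)} = Iio (-log t / h) := by
  ext v
  change t < exp (-h * v) ↔ v < -log t / h
  rw [← log_lt_iff_lt_exp ht, lt_div_iff₀ hh]
  constructor <;> intro _ <;> linarith

lemma integrableOn_exp_neg_mul_Ici (μ : Measure ℝ) [IsFiniteMeasure μ] {h : ℝ} (hh : 0 < h)
    (a : ℝ) : IntegrableOn (fun v ↦ exp (-h * v)) (Ici a) μ := by
  refine Measure.integrableOn_of_bounded (M := exp (-h * a)) (measure_ne_top _ _)
    (by fun_prop) ((ae_restrict_iff' measurableSet_Ici).2 (Eventually.of_forall fun v hv ↦ ?_))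
  rw [norm_of_nonneg (exp_pos _).le, exp_le_exp]
  nlinarith [mem_Ici.1 hv]

lemma setIntegral_Ici_exp_neg_mul (μ : Measure ℝ) [IsFiniteMeasure μ] {h : ℝ} (hh : 0 < h)
    (a : ℝ) :
    ∫ v in Ici a, exp (-h * v) ∂μ = ∫ t in Ioc 0 (exp (-h * a)), μ.real (Ico a (-log t / h)) := by
  rw [(integrableOn_exp_neg_mul_Ici μ hh a).integral_eq_integral_meas_lt
    (Eventually.of_forall fun _ ↦ (exp_pos _).le)]
  have hlevel : ∀ t ∈ Ioi (0 : ℝ),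
      (μ.restrict (Ici a)).real {v | t < exp (-h * v)} = μ.real (Ico a (-log t / h)) :=
    fun t ht ↦ by
      rw [setOf_lt_exp_neg_mul hh ht, measureReal_restrict_apply measurableSet_Iio, Iio_inter_Ici]
  rw [setIntegral_congr_fun measurableSet_Ioi hlevel]
  refine setIntegral_eq_of_subset_of_forall_sdiff_eq_zero measurableSet_Ioi Ioc_subset_Ioi_self
    fun t ⟨ht, htc⟩ ↦ ?_
  have hlog : -h * a < log t := (lt_log_iff_exp_lt ht).2 (lt_of_not_ge fun h' ↦ htc ⟨ht, h'⟩)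
  have hba : -log t / h ≤ a := by rw [div_le_iff₀ hh]; linarith
  rw [Ico_eq_empty hba.not_gt, measureReal_empty]

lemma integrableOn_measureReal_Ico (μ : Measure ℝ) [IsFiniteMeasure μ] {g : ℝ → ℝ}
    (hg : Measurable g) (a : ℝ) {s : Set ℝ} (hs : volume s ≠ ⊤) :
    IntegrableOn (fun t ↦ μ.real (Ico a (g t))) s := by
  have hmono : Monotone fun u ↦ μ.real (Ico a u) :=
    fun _ _ huv ↦ measureReal_mono (Ico_subset_Ico_right huv)
  refine Measure.integrableOn_of_bounded (M := μ.real univ) hs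
    (hmono.measurable.comp hg).aestronglyMeasurable (Eventually.of_forall fun t ↦ ?_)
  rw [norm_of_nonneg measureReal_nonneg]
  exact measureReal_mono (subset_univ _)

section CDFDistance

variable {μ ν : Measure ℝ} [IsProbabilityMeasure μ] [IsProbabilityMeasure ν] {Δ : ℝ}

lemma abs_measureReal_Iio_sub_le (hΔ : ∀ y, |μ.real (Iic y) - ν.real (Iic y)| ≤ Δ) (x : ℝ) :
    |μ.real (Iio x) - ν.real (Iio x)| ≤ Δ :=
  le_of_tendsto
    ((tendsto_measureReal_Iic_nhdsLT μ x).sub (tendsto_measureReal_Iic_nhdsLT ν x)).abs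
    (Eventually.of_forall hΔ)

lemma abs_measureReal_Ico_sub_le (hΔ : ∀ y, |μ.real (Iic y) - ν.real (Iic y)| ≤ Δ) (a b : ℝ) :
    |μ.real (Ico a b) - ν.real (Ico a b)| ≤ 2 * Δ := by
  have hIio := abs_measureReal_Iio_sub_le hΔ
  rcases le_or_gt a b with hab | hba
  · have hIco : ∀ ρ : Measure ℝ, [IsFiniteMeasure ρ] →
        ρ.real (Ico a b) = ρ.real (Iio b) - ρ.real (Iio a) := fun ρ _ ↦ by
      rw [← Iio_inter_Ici, ← compl_Iio, ← sdiff_eq,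
        measureReal_sdiff (Iio_subset_Iio hab) measurableSet_Iio]
    rw [hIco μ, hIco ν]
    calc _ = |(μ.real (Iio b) - ν.real (Iio b)) - (μ.real (Iio a) - ν.real (Iio a))| := by ring_nf
      _ ≤ Δ + Δ := (abs_sub _ _).trans (add_le_add (hIio b) (hIio a))
      _ = 2 * Δ := by ring
  · simp only [Ico_eq_empty hba.not_gt, measureReal_empty, sub_zero, abs_zero]
    linarith [(abs_nonneg _).trans (hIio a)]

theorem abs_setIntegral_Ici_exp_neg_mul_sub_le
    (hΔ : ∀ y, |μ.real (Iic y) - ν.real (Iic y)| ≤ Δ) {h : ℝ} (hh : 0 < h) (a : ℝ) :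
    |∫ v in Ici a, exp (-h * v) ∂μ - ∫ v in Ici a, exp (-h * v) ∂ν| ≤ 2 * Δ * exp (-h * a) := by
  have hg : Measurable fun t : ℝ ↦ -log t / h := by fun_prop
  rw [setIntegral_Ici_exp_neg_mul μ hh, setIntegral_Ici_exp_neg_mul ν hh,
    ← integral_sub (integrableOn_measureReal_Ico μ hg a measure_Ioc_lt_top.ne)
      (integrableOn_measureReal_Ico ν hg a measure_Ioc_lt_top.ne), ← norm_eq_abs]
  calc _ ≤ 2 * Δ * volume.real (Ioc 0 (exp (-h * a))) :=
        norm_setIntegral_le_of_norm_le_const measure_Ioc_lt_top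
          fun t _ ↦ abs_measureReal_Ico_sub_le hΔ a _
    _ = 2 * Δ * exp (-h * a) := by rw [volume_real_Ioc_of_le (exp_pos _).le, sub_zero]

end CDFDistance

/-- If `F` is a distribution function, `Φ` the standard normal distribution function,
`R = F − Φ` and `Δ = sup_v |R(v)|`, then for every `h > 0` and real `a`,
`|∫_{[a,∞)} e^{−hv} dR(v)| ≤ 2Δ e^{−ha}` (the integral being taken against the difference
of the two probability measures); in particular it is `≤ 2Δ` when `a ≥ 0`. -/
theorem tilted_integral_against_cdf_difference
    (ν : Measure ℝ) [IsProbabilityMeasure ν]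
    (F Φ R : ℝ → ℝ)
    (hF : ∀ v, F v = (ν (Iic v)).toReal)
    (hΦ : ∀ v, Φ v = ((gaussianReal 0 1) (Iic v)).toReal)
    (hR : ∀ v, R v = F v - Φ v)
    (Δ : ℝ) (hΔ : Δ = ⨆ v : ℝ, |R v|) :
    ∀ h : ℝ, 0 < h → ∀ a : ℝ,
      |(∫ v in Ici a, Real.exp (-h * v) ∂ν)
          - ∫ v in Ici a, Real.exp (-h * v) ∂(gaussianReal 0 1)|
        ≤ 2 * Δ * Real.exp (-h * a) ∧
      (0 ≤ a →
        |(∫ v in Ici a, Real.exp (-h * v) ∂ν)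
            - ∫ v in Ici a, Real.exp (-h * v) ∂(gaussianReal 0 1)| ≤ 2 * Δ) := by
  intro h hh a
  have hR_eq : ∀ v, R v = ν.real (Iic v) - (gaussianReal 0 1).real (Iic v) := fun v ↦ by
    rw [hR, hF, hΦ, measureReal_def, measureReal_def]
  have hbdd : BddAbove (range fun v ↦ |R v|) := ⟨1, forall_mem_range.2 fun v ↦ by
    rw [hR_eq]
    exact abs_sub_le_of_nonneg_of_le measureReal_nonneg measureReal_le_one measureReal_nonneg
      measureReal_le_one⟩
  have hcdf : ∀ y, |ν.real (Iic y) - (gaussianReal 0 1).real (Iic y)| ≤ Δ := fun y ↦ by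
    rw [← hR_eq, hΔ]
    exact le_ciSup hbdd y
  have key := abs_setIntegral_Ici_exp_neg_mul_sub_le hcdf hh a
  refine ⟨key, fun ha ↦ key.trans (mul_le_of_le_one_right ?_ (exp_le_one_iff.2 ?_))⟩
  · linarith [(abs_nonneg _).trans (hcdf 0)]
  · nlinarith
end
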